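/- arXiv:0910.5639 — 6 statements merged into one kernel-verified Lean document; each statement's English description precedes it below -/
import Mathlib

section
/- Let f : C → D be a functor between small categories that is a left deformation retract, i.e., there exists r : D → C with r ∘ f = 1_C and a natural transformation η : f ∘ r ⟶ 1_D satisfying η_{f(c)} = 1_{f(c)} for all objects c of C. Then for every object d of D, the comma category f ↓ d (objects: pairs (c, u) with u : f(c) → d) is connected (nonempty and any two objects are linked by a zigzag of morphisms). -/
open CategoryTheory

/-- If `f : C ⥤ D` is a left deformation retract of small categories
(there is `r : D ⥤ C` with `f ⋙ r = 𝟭 C` and a natural transformation `η : r ⋙ f ⟶ 𝟭 D`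
whose component at every `f.obj c` is the identity), then for every object `d` of `D`
the comma category `f ↓ d` (costructured arrows from `f` to `d`) is connected. -/
theorem comma_connected_of_leftDeformationRetract
    {C D : Type} [SmallCategory C] [SmallCategory D]
    (f : C ⥤ D) (r : D ⥤ C) (hrf : f ⋙ r = 𝟭 C)
    (η : r ⋙ f ⟶ 𝟭 D)
    (hη : ∀ c : C, η.app (f.obj c) =
      eqToHom (by
        have : r.obj (f.obj c) = c := Functor.congr_obj hrf c
        simp [this]))
    (d : D) :
    IsConnected (CostructuredArrow f d) := by
  have key : ∀ Y : CostructuredArrow f d,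
      Y ⟶ CostructuredArrow.mk (η.app d) := by
    intro Y
    refine CostructuredArrow.homMk
      (eqToHom (Functor.congr_obj hrf Y.left).symm ≫ r.map Y.hom) ?_
    have hnat := η.naturality Y.hom
    simp only [Functor.comp_map, Functor.id_map] at hnat
    simp only [CostructuredArrow.mk_hom_eq_self, Functor.map_comp, Category.assoc, eqToHom_map]
    erw [hnat]
    rw [hη]
    simp
  have : Nonempty (CostructuredArrow f d) := ⟨CostructuredArrow.mk (η.app d)⟩
  apply zigzag_isConnected
  intro j₁ j₂
  exact (Zigzag.of_hom (key j₁)).trans (Zigzag.of_inv (key j₂))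
end

section
/- Let ι : C → D be a functor between small categories such that for every object d of D, each connected component of the under-category d ↓ ι has an initial object. Then for every functor M : C → Ab, the right Kan extension R_ι(M) : D → Ab satisfies R_ι(M)(d) ≅ ∏ M(c_0), the product running over the connected components of d ↓ ι, with (c_0, α_0) an initial object of the corresponding component. Consequently, R_ι is an exact functor from C-modules to D-modules. -/
open CategoryTheory Limits

universe w u

/-!
Choosing an initial object `x₀ i` in every connected component `i` of `d ↓ ι` makes
`Discrete.functor x₀ : π₀(d ↓ ι) → d ↓ ι` an initial functor. Hence the limit over `d ↓ ι`
computing `(R_ι M)(d)` can be taken over the discrete category `π₀(d ↓ ι)`, where it is the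
product `∏ᵢ M(x₀ i)`. Products are exact in `Ab`, and exactness of limits passes along initial
functors, so limits of shape `d ↓ ι` are exact and `R_ι` is right exact; it is left exact
as a right adjoint.
-/

namespace CategoryTheory

theorem Functor.initial_discreteFunctor_of_initial_in_components {J : Type*} [Category J]
    (x : ConnectedComponents J → J) (hx : ∀ i, ConnectedComponents.mk (x i) = i)
    (hinit : ∀ i y, ConnectedComponents.mk y = i → ∃! _ : x i ⟶ y, True) :
    (Discrete.functor x).Initial where
  out y := by
    have component_eq (f : CostructuredArrow (Discrete.functor x) y) :
        f.left.as = ConnectedComponents.mk y :=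
      (hx _).symm.trans (Quotient.sound' (Zigzag.of_hom f.hom))
    have : Nonempty (CostructuredArrow (Discrete.functor x) y) :=
      ⟨CostructuredArrow.mk (S := Discrete.functor x)
        (Y := Discrete.mk (ConnectedComponents.mk y)) (hinit _ y rfl).exists.choose⟩
    refine zigzag_isConnected fun f g => Zigzag.of_hom (CostructuredArrow.homMk
      (eqToHom (Discrete.ext ((component_eq f).trans (component_eq g).symm))) ?_)
    exact (hinit _ y (component_eq f).symm).unique trivial trivial

section

variable {C D H : Type*} [Category C] [Category D] [Category H] (L : C ⥤ D)

noncomputable def Functor.ranCompEvaluationIso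
    [∀ Y : D, HasLimitsOfShape (StructuredArrow Y L) H] (X : D) :
    L.ran ⋙ (evaluation D H).obj X ≅
      (whiskeringLeft _ _ H).obj (StructuredArrow.proj X L) ⋙ lim :=
  NatIso.ofComponents (fun F => L.ranObjObjIsoLimit F X) fun φ => limit.hom_ext fun f => by
    have counit_naturality := congr_app (L.ranCounit.naturality φ) f.right
    dsimp at counit_naturality ⊢
    simp only [Category.assoc, Functor.ranObjObjIsoLimit_hom_π, limMap_π,
      Functor.ranObjObjIsoLimit_hom_π_assoc]
    exact ((L.ran.map φ).naturality_assoc f.hom _).symm.trans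
      (congrArg ((L.ran.obj _).map f.hom ≫ ·) counit_naturality)

theorem Functor.preservesFiniteColimits_ran [HasFiniteColimits H]
    [∀ Y : D, HasLimitsOfShape (StructuredArrow Y L) H]
    [∀ Y : D, HasExactLimitsOfShape (StructuredArrow Y L) H] :
    PreservesFiniteColimits (L.ran : (C ⥤ H) ⥤ D ⥤ H) :=
  preservesFiniteColimits_of_evaluation _ fun X =>
    have : PreservesFiniteColimits ((whiskeringLeft _ _ H).obj (StructuredArrow.proj X L)) :=
      ⟨fun _ ↦ inferInstance⟩
    preservesFiniteColimits_of_natIso (L.ranCompEvaluationIso X).symm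

theorem Functor.preservesFiniteLimits_ran [∀ F : C ⥤ H, L.HasRightKanExtension F] :
    PreservesFiniteLimits (L.ran : (C ⥤ H) ⥤ D ⥤ H) :=
  have := (L.ranAdjunction H).isRightAdjoint
  inferInstance

end

end CategoryTheory

noncomputable def AddCommGrpCat.limitIsoPiOfInitial {J : Type*} [Category J] {I : Type w}
    (x : I → J) [(Discrete.functor x).Initial] (F : J ⥤ AddCommGrpCat.{max w u}) [HasLimit F] :
    limit F ≅ AddCommGrpCat.of (∀ i, F.obj (x i)) :=
  (Functor.Initial.limitIso (Discrete.functor x) F).symm ≪≫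
    HasLimit.isoOfNatIso (Discrete.compNatIsoDiscrete x F) ≪≫
    limit.isoLimitCone (AddCommGrpCat.HasLimit.productLimitCone _)

/-- Let `ι : C ⥤ D` be a functor between small categories such that for
every `d : D` each connected component of the under-category `d ↓ ι` (structured arrows
from `d` to `ι`) has an initial object.  Then for every `M : C ⥤ Ab` the right Kan
extension `R_ι M` satisfies `(R_ι M)(d) ≅ ∏ M(c₀)`, the product running over the connected
components of `d ↓ ι` with `(c₀, α₀)` an initial object of the corresponding component;
consequently `R_ι` is an exact functor. -/
theorem ran_obj_iso_pi_initial_and_exact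
    {C D : Type} [SmallCategory C] [SmallCategory D] (ι : C ⥤ D)
    [∀ F : C ⥤ AddCommGrpCat, ι.HasRightKanExtension F]
    (x₀ : ∀ d : D, ConnectedComponents (StructuredArrow d ι) → StructuredArrow d ι)
    (hx₀ : ∀ (d : D) (i : ConnectedComponents (StructuredArrow d ι)),
      Quotient.mk (Zigzag.setoid (StructuredArrow d ι)) (x₀ d i) = i)
    (hinit : ∀ (d : D) (i : ConnectedComponents (StructuredArrow d ι))
      (y : StructuredArrow d ι),
        Quotient.mk (Zigzag.setoid (StructuredArrow d ι)) y = i →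
          ∃! _ : (x₀ d i ⟶ y), True) :
    (∀ (M : C ⥤ AddCommGrpCat) (d : D),
        Nonempty (((ι.ran.obj M).obj d : AddCommGrpCat) ≃+
          ((i : ConnectedComponents (StructuredArrow d ι)) → M.obj ((x₀ d i).right)))) ∧
      Nonempty (PreservesFiniteLimits (ι.ran : (C ⥤ AddCommGrpCat) ⥤ D ⥤ AddCommGrpCat)) ∧
      Nonempty (PreservesFiniteColimits (ι.ran : (C ⥤ AddCommGrpCat) ⥤ D ⥤ AddCommGrpCat)) := by
  have (d : D) : (Discrete.functor (x₀ d)).Initial :=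
    Functor.initial_discreteFunctor_of_initial_in_components _ (hx₀ d) (hinit d)
  -- `u_1` is the universe of `AddCommGrpCat` in the statement; left implicit it would default to 0.
  have (d : D) : HasExactLimitsOfShape (StructuredArrow d ι) AddCommGrpCat.{u_1} :=
    hasExactLimitsOfShape_of_initial _ (Discrete.functor (x₀ d))
  refine ⟨fun M d => ⟨((ι.ranCompEvaluationIso d).app M ≪≫
    AddCommGrpCat.limitIsoPiOfInitial (x₀ d) _).addCommGroupIsoToAddEquiv⟩,
    ⟨ι.preservesFiniteLimits_ran⟩, ⟨ι.preservesFiniteColimits_ran⟩⟩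
end

section
/- Let G be a finite group, S ∈ Syl_p(G) a Sylow p-subgroup. Then the category F_S(G), whose objects are the subgroups of S and whose morphisms Hom(P,Q) are the group homomorphisms P → Q induced by conjugation by elements of G (i.e., maps x ↦ gxg^{-1} for g with gPg^{-1} ≤ Q), is a saturated fusion system over S. -/
open Subgroup

variable {G : Type} [Group G]

/-- The conjugate `gPg⁻¹` of a subgroup. -/
def conjSub (g : G) (P : Subgroup G) : Subgroup G :=
  P.map (MulAut.conj g).toMonoidHom

/-- A homomorphism `P →* Q` belongs to `Hom_{F_S(G)}(P,Q)` iff it is induced by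
conjugation by some element of `G`. -/
def IsFusionMor {G : Type} [Group G] (P Q : Subgroup G) (φ : ↥P →* ↥Q) : Prop :=
  ∃ g : G, ∀ x : ↥P, ((φ x : ↥Q) : G) = g * (x : G) * g⁻¹

/-- Membership in `Hom_S(P,Q)`: induced by conjugation by an element of `S`. -/
def IsSubConjMor {G : Type} [Group G] (S P Q : Subgroup G) (φ : ↥P →* ↥Q) : Prop :=
  ∃ g ∈ S, ∀ x : ↥P, ((φ x : ↥Q) : G) = g * (x : G) * g⁻¹

/-- Two subgroups are `F_S(G)`-conjugate iff they are conjugate in `G`. -/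
def IsFConj {G : Type} [Group G] (P Q : Subgroup G) : Prop :=
  ∃ g : G, conjSub g P = Q

/-- `P` is fully centralized in `F_S(G)`. -/
def FullyCentralized {G : Type} [Group G] (S P : Subgroup G) : Prop :=
  ∀ Q : Subgroup G, Q ≤ S → IsFConj P Q →
    Nat.card ↥(Subgroup.centralizer (Q : Set G) ⊓ S) ≤
      Nat.card ↥(Subgroup.centralizer (P : Set G) ⊓ S)

/-- `P` is fully normalized in `F_S(G)`. -/
def FullyNormalized {G : Type} [Group G] (S P : Subgroup G) : Prop :=
  ∀ Q : Subgroup G, Q ≤ S → IsFConj P Q →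
    Nat.card ↥(Subgroup.normalizer (Q : Set G) ⊓ S) ≤ Nat.card ↥(Subgroup.normalizer (P : Set G) ⊓ S)

/-- The group `Aut_{F_S(G)}(P)` of automorphisms of `P` induced by conjugation in `G`. -/
def autF (P : Subgroup G) : Subgroup (MulAut ↥P) where
  carrier := {f | ∃ g : G, ∀ x : ↥P, ((f x : ↥P) : G) = g * (x : G) * g⁻¹}
  one_mem' := ⟨1, fun x => by simp⟩
  mul_mem' := by
    rintro f₁ f₂ ⟨g₁, h₁⟩ ⟨g₂, h₂⟩
    refine ⟨g₁ * g₂, fun x => ?_⟩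
    have : (f₁ * f₂) x = f₁ (f₂ x) := rfl
    rw [this, h₁ (f₂ x), h₂ x]
    group
  inv_mem' := by
    rintro f ⟨g, h⟩
    refine ⟨g⁻¹, fun x => ?_⟩
    have := h (f⁻¹ x)
    have hfx : f (f⁻¹ x) = x := by simp
    rw [hfx] at this
    rw [this]
    group

/-- The group `Aut_S(P)` of automorphisms of `P` induced by conjugation by elements of `S`. -/
def autS (S P : Subgroup G) : Subgroup (MulAut ↥P) where
  carrier := {f | ∃ g ∈ S, ∀ x : ↥P, ((f x : ↥P) : G) = g * (x : G) * g⁻¹}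
  one_mem' := ⟨1, S.one_mem, fun x => by simp⟩
  mul_mem' := by
    rintro f₁ f₂ ⟨g₁, hg₁, h₁⟩ ⟨g₂, hg₂, h₂⟩
    refine ⟨g₁ * g₂, S.mul_mem hg₁ hg₂, fun x => ?_⟩
    have : (f₁ * f₂) x = f₁ (f₂ x) := rfl
    rw [this, h₁ (f₂ x), h₂ x]
    group
  inv_mem' := by
    rintro f ⟨g, hg, h⟩
    refine ⟨g⁻¹, S.inv_mem hg, fun x => ?_⟩
    have := h (f⁻¹ x)
    have hfx : f (f⁻¹ x) = x := by simp
    rw [hfx] at this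
    rw [this]
    group

/-- The subset `N_φ ⊆ N_S(P)` appearing in the extension axiom, for the morphism
`φ = c_g : P → S`. -/
def Nphi (S P : Subgroup G) (g : G) : Set G :=
  {n | n ∈ S ⊓ Subgroup.normalizer (P : Set G) ∧
    ∃ s ∈ S, ∀ x ∈ P, g * (n * x * n⁻¹) * g⁻¹ = s * (g * x * g⁻¹) * s⁻¹}

/-!
Everything reduces to Sylow's theorems in normalizers and centralizers. If `P ≤ S` is fully
normalized (resp. centralized), then `N_S(P)` (resp. `C_S(P)`) is Sylow in `N_G(P)` (resp.
`C_G(P)`): a Sylow subgroup `T` of `N_G(P)` containing `N_S(P)` generates a `p`-group with `P`,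
which some conjugation moves into `S`, and maximality of `|N_S(P)|` forces `T = N_S(P)`.
For the extension axiom with `Q = gPg⁻¹`, the conjugate `g N_φ g⁻¹` lies in `N_S(Q) C_G(Q)`,
in which `N_S(Q)` is Sylow because `C_S(Q)` is Sylow in `C_G(Q)`; conjugating it into `N_S(Q)`
by some `c ∈ C_G(Q)` shows that `c_{cg}` extends `c_g`.
-/

open scoped Pointwise

section Conjugation

lemma conj_mem_conjSub {g x : G} {P : Subgroup G} (hx : x ∈ P) : g * x * g⁻¹ ∈ conjSub g P :=
  ⟨x, hx, rfl⟩

lemma conjSub_mul (g h : G) (P : Subgroup G) :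
    conjSub (g * h) P = conjSub g (conjSub h P) := by
  rw [conjSub, conjSub, conjSub, Subgroup.map_map, map_mul]; rfl

lemma conjSub_mono {g : G} {P Q : Subgroup G} (h : P ≤ Q) : conjSub g P ≤ conjSub g Q :=
  Subgroup.map_mono h

lemma card_conjSub (g : G) (P : Subgroup G) : Nat.card (conjSub g P) = Nat.card P :=
  Subgroup.card_map_of_injective (MulAut.conj g).injective

lemma conjSub_eq_self_iff {g : G} {P : Subgroup G} :
    conjSub g P = P ↔ g ∈ normalizer (P : Set G) :=
  mem_normalizer_iff_map_conj_eq.symm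

@[simp]
lemma conjSub_one (P : Subgroup G) : conjSub 1 P = P :=
  conjSub_eq_self_iff.2 (one_mem _)

lemma conjSub_congr {a b : G} {P : Subgroup G} (h : ∀ x ∈ P, a * x * a⁻¹ = b * x * b⁻¹) :
    conjSub a P = conjSub b P := by
  ext y
  exact ⟨fun ⟨x, hx, hxy⟩ => ⟨x, hx, (h x hx).symm.trans hxy⟩,
    fun ⟨x, hx, hxy⟩ => ⟨x, hx, (h x hx).trans hxy⟩⟩

lemma inv_mul_mem_centralizer {a b : G} {P : Subgroup G}
    (h : ∀ x ∈ P, a * x * a⁻¹ = b * x * b⁻¹) :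
    a⁻¹ * b ∈ centralizer (P : Set G) := by
  refine mem_centralizer_iff.2 fun x hx => ?_
  have := h x hx
  calc x * (a⁻¹ * b) = a⁻¹ * (a * x * a⁻¹) * b := by group
    _ = a⁻¹ * (b * x * b⁻¹) * b := by rw [this]
    _ = a⁻¹ * b * x := by group

lemma normalizer_conjSub (g : G) (P : Subgroup G) :
    normalizer (conjSub g P : Set G) = conjSub g (normalizer (P : Set G)) :=
  (map_equiv_normalizer_eq P (MulAut.conj g)).symm

lemma conjSub_centralizer_le (g : G) (P : Subgroup G) :
    conjSub g (centralizer (P : Set G)) ≤ centralizer (conjSub g P : Set G) :=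
  map_centralizer_le_centralizer_image (P : Set G) (MulAut.conj g).toMonoidHom

lemma centralizer_conjSub (g : G) (P : Subgroup G) :
    centralizer (conjSub g P : Set G) = conjSub g (centralizer (P : Set G)) := by
  refine le_antisymm ?_ (conjSub_centralizer_le g P)
  have h := conjSub_mono (g := g) (conjSub_centralizer_le g⁻¹ (conjSub g P))
  rwa [← conjSub_mul, ← conjSub_mul, mul_inv_cancel, conjSub_one, inv_mul_cancel,
    conjSub_one] at h

end Conjugation

section Morphisms

variable {S P Q : Subgroup G} {φ : P →* Q}

lemma IsSubConjMor.isFusionMor (h : IsSubConjMor S P Q φ) : IsFusionMor P Q φ :=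
  let ⟨g, _, hg⟩ := h
  ⟨g, hg⟩

lemma IsFusionMor.injective (h : IsFusionMor P Q φ) : Function.Injective φ := by
  obtain ⟨g, hg⟩ := h
  intro x y hxy
  have hconj := congrArg (fun z : Q => (z : G)) hxy
  simp only [hg, mul_left_inj, mul_right_inj] at hconj
  exact Subtype.ext hconj

lemma IsFusionMor.exists_eq_inclusion_comp (h : IsFusionMor P Q φ) :
    ∃ (R : Subgroup G) (hR : R ≤ Q) (ψ : P →* R),
      IsFusionMor P R ψ ∧ Function.Bijective ψ ∧ φ = (inclusion hR).comp ψ := by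
  obtain ⟨g, hg⟩ := h
  have hR : conjSub g P ≤ Q := by
    rintro _ ⟨x, hx, rfl⟩
    change g * x * g⁻¹ ∈ Q
    exact hg ⟨x, hx⟩ ▸ (φ ⟨x, hx⟩).2
  let ψ := P.equivMapOfInjective (MulAut.conj g).toMonoidHom (MulAut.conj g).injective
  exact ⟨conjSub g P, hR, ψ.toMonoidHom, ⟨g, fun x => rfl⟩, ψ.bijective,
    MonoidHom.ext fun x => Subtype.ext (hg x)⟩

end Morphisms

/-- `H` is a Sylow `p`-subgroup of `K`, both taken as subgroups of `G`; as in `Sylow`, this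
means maximal among the `p`-subgroups of `K`. -/
structure IsSylowIn (p : ℕ) (H K : Subgroup G) : Prop where
  le : H ≤ K
  isPGroup : IsPGroup p H
  eq_of_le : ∀ ⦃T : Subgroup G⦄, T ≤ K → IsPGroup p T → H ≤ T → T = H

namespace IsSylowIn

variable {p : ℕ} {H K X : Subgroup G}

def toSylow (h : IsSylowIn p H K) : Sylow p K where
  toSubgroup := H.subgroupOf K
  isPGroup' := h.isPGroup.comap_subtype
  is_maximal' {Q} hQ hHQ := by
    have hQH : Q.map K.subtype = H :=
      h.eq_of_le (map_subtype_le Q) (hQ.map _) fun x hx => ⟨⟨x, h.le hx⟩, hHQ hx, rfl⟩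
    rw [← hQH, subgroupOf, comap_map_eq_self_of_injective K.subtype_injective]

lemma sup_of_inf {C : Subgroup G} (hH : IsPGroup p H) (hHC : H ≤ normalizer (C : Set G))
    (hC : IsSylowIn p (H ⊓ C) C) : IsSylowIn p H (H ⊔ C) := by
  refine ⟨le_sup_left, hH, fun T hT hTp hHT => le_antisymm (fun t ht => ?_) hHT⟩
  obtain ⟨a, ha, c, hc, rfl⟩ : t ∈ (H : Set G) * C := by
    rw [← coe_mul_of_left_le_normalizer_right H C hHC]
    exact hT ht
  have hTC : T ⊓ C = H ⊓ C :=
    hC.eq_of_le inf_le_right (hTp.to_le inf_le_left) (inf_le_inf_right C hHT)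
  have hcT : c ∈ T ⊓ C :=
    ⟨by simpa using mul_mem (inv_mem (hHT ha)) ht, hc⟩
  rw [hTC] at hcT
  exact mul_mem ha hcT.1

variable [Fact p.Prime] [Finite G]

lemma not_dvd_relIndex (h : IsSylowIn p H K) : ¬ p ∣ H.relIndex K :=
  h.toSylow.not_dvd_index

lemma exists_conjSub_le (h : IsSylowIn p H K) (hXK : X ≤ K) (hX : IsPGroup p X) :
    ∃ k ∈ K, conjSub k X ≤ H := by
  obtain ⟨R, hR⟩ := (hX.comap_subtype (K := K)).exists_le_sylow
  obtain ⟨k, hk⟩ := MulAction.exists_smul_eq K R h.toSylow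
  refine ⟨k, k.2, ?_⟩
  rintro _ ⟨x, hx, rfl⟩
  have hmem : k * ⟨x, hXK hx⟩ * k⁻¹ ∈ ((k • R : Sylow p K) : Subgroup K) := by
    rw [Sylow.coe_subgroup_smul, ← MulAut.conj_apply]
    exact Subgroup.smul_mem_pointwise_smul _ _ _ (hR hx)
  rw [hk] at hmem
  exact hmem

lemma exists_mem_conjSub_le_of_sup {C : Subgroup G} (h : IsSylowIn p H (H ⊔ C))
    (hHC : H ≤ normalizer (C : Set G)) (hXK : X ≤ H ⊔ C) (hX : IsPGroup p X) :
    ∃ c ∈ C, conjSub c X ≤ H := by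
  obtain ⟨k, hk, hkX⟩ := h.exists_conjSub_le hXK hX
  obtain ⟨a, ha, c, hc, rfl⟩ : k ∈ (H : Set G) * C := by
    rw [← coe_mul_of_left_le_normalizer_right H C hHC]
    exact hk
  refine ⟨c, hc, ?_⟩
  beta_reduce at hkX
  have := conjSub_mono (g := a⁻¹) hkX
  rwa [← conjSub_mul, inv_mul_cancel_left,
    conjSub_eq_self_iff.2 (le_normalizer (inv_mem ha))] at this

end IsSylowIn

lemma Subgroup.relIndex_map_range_dvd_index {A B : Type*} [Group A] [Group B] (f : A →* B)
    (H : Subgroup A) : (H.map f).relIndex f.range ∣ H.index := by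
  rw [MonoidHom.range_eq_map, relIndex_map_map, sup_eq_left.2 le_top, relIndex_top_right]
  exact index_dvd_of_le le_sup_left

lemma mem_normalizer_of_forall_conj_eq {P : Subgroup G} {f : MulAut P} {g : G}
    (h : ∀ x : P, ((f x : P) : G) = g * x * g⁻¹) : g ∈ normalizer (P : Set G) := by
  refine conjSub_eq_self_iff.1 (le_antisymm ?_ fun y hy => ?_)
  · rintro _ ⟨x, hx, rfl⟩
    change g * x * g⁻¹ ∈ P
    exact h ⟨x, hx⟩ ▸ (f ⟨x, hx⟩).2
  · refine ⟨_, (f.symm ⟨y, hy⟩).2, ?_⟩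
    rw [MulEquiv.coe_toMonoidHom, MulAut.conj_apply, ← h, MulEquiv.apply_symm_apply]

lemma autF_eq_range (P : Subgroup G) : autF P = P.normalizerMonoidHom.range := by
  ext f
  constructor
  · rintro ⟨g, hg⟩
    exact ⟨⟨g, mem_normalizer_of_forall_conj_eq hg⟩,
      MulEquiv.ext fun x => Subtype.ext (hg x).symm⟩
  · rintro ⟨n, rfl⟩
    exact ⟨n, fun x => rfl⟩

lemma autS_eq_map (S P : Subgroup G) :
    autS S P = (S.subgroupOf (normalizer (P : Set G))).map P.normalizerMonoidHom := by
  ext f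
  constructor
  · rintro ⟨s, hs, hsf⟩
    exact ⟨⟨s, mem_normalizer_of_forall_conj_eq hsf⟩, hs,
      MulEquiv.ext fun x => Subtype.ext (hsf x).symm⟩
  · rintro ⟨n, hn, rfl⟩
    exact ⟨n, hn, fun x => rfl⟩

lemma isPGroup_autS {p : ℕ} (S : Sylow p G) (P : Subgroup G) : IsPGroup p (autS S P) := by
  rw [autS_eq_map]
  exact S.isPGroup'.comap_subtype.map _

lemma conj_mem_sup_centralizer_of_mem_Nphi {S P : Subgroup G} {g n : G}
    (hn : n ∈ Nphi S P g) :
    g * n * g⁻¹ ∈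
      (normalizer (conjSub g P : Set G) ⊓ S) ⊔ centralizer (conjSub g P : Set G) := by
  obtain ⟨hnSN, s, hs, hsn⟩ := hn
  have hconj : ∀ x ∈ P, s * g * x * (s * g)⁻¹ = g * n * x * (g * n)⁻¹ := fun x hx =>
    calc s * g * x * (s * g)⁻¹ = s * (g * x * g⁻¹) * s⁻¹ := by group
      _ = g * (n * x * n⁻¹) * g⁻¹ := (hsn x hx).symm
      _ = g * n * x * (g * n)⁻¹ := by group
  have hsN : s ∈ normalizer (conjSub g P : Set G) := by
    rw [← conjSub_eq_self_iff, ← conjSub_mul, conjSub_congr hconj, conjSub_mul,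
      conjSub_eq_self_iff.2 hnSN.2]
  have hsC : s⁻¹ * (g * n * g⁻¹) ∈ centralizer (conjSub g P : Set G) := by
    rw [centralizer_conjSub]
    convert conj_mem_conjSub (g := g) (inv_mul_mem_centralizer hconj) using 1
    group
  rw [show g * n * g⁻¹ = s * (s⁻¹ * (g * n * g⁻¹)) by group]
  exact mul_mem (mem_sup_left ⟨hsN, hs⟩) (mem_sup_right hsC)

section Saturation

variable {p : ℕ} [Fact p.Prime] [Finite G]

lemma Sylow.exists_conjSub_le (S : Sylow p G) {X : Subgroup G} (hX : IsPGroup p X) :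
    ∃ g : G, conjSub g X ≤ S := by
  obtain ⟨R, hR⟩ := hX.exists_le_sylow
  obtain ⟨g, hg⟩ := MulAction.exists_smul_eq G R S
  refine ⟨g, ?_⟩
  rw [← hg, Sylow.coe_subgroup_smul]
  exact conjSub_mono hR

lemma isSylowIn_inf_of_card_le (S : Sylow p G) {P K : Subgroup G} (hP : P ≤ S)
    (hK : K ≤ normalizer (P : Set G))
    (hmax : ∀ g : G, conjSub g P ≤ S →
      Nat.card (conjSub g K ⊓ S : Subgroup G) ≤ Nat.card (K ⊓ S : Subgroup G)) :
    IsSylowIn p (K ⊓ S) K := by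
  refine ⟨inf_le_left, S.isPGroup'.to_le inf_le_right, fun T hTK hT hKT => ?_⟩
  have hPT : IsPGroup p (P ⊔ T : Subgroup G) :=
    (S.isPGroup'.to_le hP).to_sup_of_normal_left' hT (hTK.trans hK)
  obtain ⟨g, hg⟩ := S.exists_conjSub_le hPT
  have hgT : conjSub g T ≤ conjSub g K ⊓ S :=
    le_inf (conjSub_mono hTK) ((conjSub_mono le_sup_right).trans hg)
  refine (eq_of_le_of_card_ge hKT ?_).symm
  calc Nat.card T = Nat.card (conjSub g T) := (card_conjSub g T).symm
    _ ≤ Nat.card (conjSub g K ⊓ S : Subgroup G) := card_le_of_le hgT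
    _ ≤ Nat.card (K ⊓ S : Subgroup G) := hmax g ((conjSub_mono le_sup_left).trans hg)

lemma FullyNormalized.isSylowIn {S : Sylow p G} {P : Subgroup G} (hP : P ≤ S)
    (h : FullyNormalized S P) :
    IsSylowIn p (normalizer (P : Set G) ⊓ S) (normalizer (P : Set G)) :=
  isSylowIn_inf_of_card_le S hP le_rfl fun g hg => by
    rw [← normalizer_conjSub]
    exact h _ hg ⟨g, rfl⟩

lemma FullyCentralized.isSylowIn {S : Sylow p G} {P : Subgroup G} (hP : P ≤ S)
    (h : FullyCentralized S P) :
    IsSylowIn p (centralizer (P : Set G) ⊓ S) (centralizer (P : Set G)) :=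
  isSylowIn_inf_of_card_le S hP (centralizer_le_normalizer _) fun g hg => by
    rw [← centralizer_conjSub]
    exact h _ hg ⟨g, rfl⟩

lemma FullyNormalized.fullyCentralized {S : Sylow p G} {P : Subgroup G} (hP : P ≤ S)
    (h : FullyNormalized S P) : FullyCentralized S P := by
  rintro _ - ⟨g, rfl⟩
  set A : Subgroup G := centralizer (conjSub g P : Set G) ⊓ S
  have hAN : conjSub g⁻¹ A ≤ normalizer (P : Set G) := by
    have := conjSub_mono (g := g⁻¹) (inf_le_left.trans (centralizer_le_normalizer _) :
      A ≤ normalizer (conjSub g P : Set G))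
    rwa [normalizer_conjSub, ← conjSub_mul, inv_mul_cancel, conjSub_one] at this
  obtain ⟨k, hk, hkA⟩ := (h.isSylowIn hP).exists_conjSub_le hAN
    ((S.isPGroup'.to_le inf_le_right).map _)
  have hcP : conjSub (k * g⁻¹) (conjSub g P) = P := by
    rw [conjSub_mul, ← conjSub_mul g⁻¹, inv_mul_cancel, conjSub_one, conjSub_eq_self_iff.2 hk]
  have hcA : conjSub (k * g⁻¹) A ≤ centralizer (P : Set G) ⊓ S := by
    refine le_inf ?_ ?_
    · rw [← hcP, centralizer_conjSub]
      exact conjSub_mono inf_le_left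
    · rw [conjSub_mul]
      exact hkA.trans inf_le_right
  calc Nat.card A = Nat.card (conjSub (k * g⁻¹) A) := (card_conjSub _ A).symm
    _ ≤ Nat.card (centralizer (P : Set G) ⊓ S : Subgroup G) := card_le_of_le hcA

lemma FullyNormalized.not_dvd_index_autS {S : Sylow p G} {P : Subgroup G} (hP : P ≤ S)
    (h : FullyNormalized S P) : ¬ p ∣ ((autS S P).subgroupOf (autF P)).index := by
  rw [autS_eq_map, autF_eq_range]
  intro hdvd
  refine (h.isSylowIn hP).not_dvd_relIndex ?_
  rw [inf_relIndex_left]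
  exact hdvd.trans (relIndex_map_range_dvd_index _ _)

lemma FullyCentralized.exists_extension {S : Sylow p G} {P : Subgroup G} {g : G}
    (hQS : conjSub g P ≤ S) (h : FullyCentralized S (conjSub g P)) :
    ∃ g' : G, (∀ n ∈ Nphi S P g, g' * n * g'⁻¹ ∈ S) ∧
      ∀ x ∈ P, g' * x * g'⁻¹ = g * x * g⁻¹ := by
  set Q := conjSub g P
  set H : Subgroup G := normalizer (Q : Set G) ⊓ S
  set C := centralizer (Q : Set G)
  have hHC : H ≤ normalizer (C : Set G) := fun x hx => by
    rw [← conjSub_eq_self_iff, ← centralizer_conjSub, conjSub_eq_self_iff.2 hx.1]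
  have hC : IsSylowIn p (H ⊓ C) C := by
    rw [inf_right_comm, inf_eq_right.2 (centralizer_le_normalizer _)]
    exact h.isSylowIn hQS
  set X := conjSub g (closure (Nphi S P g))
  have hXK : X ≤ H ⊔ C :=
    map_le_iff_le_comap.2 ((closure_le _).2 fun n hn => conj_mem_sup_centralizer_of_mem_Nphi hn)
  have hX : IsPGroup p X := (S.isPGroup'.to_le ((closure_le _).2 fun n hn => hn.1.1)).map _
  obtain ⟨c, hc, hcX⟩ := (hC.sup_of_inf (S.isPGroup'.to_le inf_le_right) hHC)
    |>.exists_mem_conjSub_le_of_sup hHC hXK hX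
  refine ⟨c * g, fun n hn => ?_, fun x hx => ?_⟩
  · have := hcX (conj_mem_conjSub (g := c) (conj_mem_conjSub (g := g) (subset_closure hn)))
    simpa [mul_assoc] using this.2
  · have hcx := mem_centralizer_iff.1 hc _ (conj_mem_conjSub hx)
    calc c * g * x * (c * g)⁻¹ = c * (g * x * g⁻¹) * c⁻¹ := by group
      _ = g * x * g⁻¹ := by rw [← hcx]; group

end Saturation

/-- For a finite group `G` with Sylow `p`-subgroup `S`, the fusion
category `F_S(G)` (morphisms = homomorphisms induced by conjugation in `G`) is a
saturated fusion system over `S`:  (1) `Hom_S(P,Q) ⊆ Hom_F(P,Q) ⊆ Inj(P,Q)`;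
(2) every morphism factors as an `F`-isomorphism followed by an inclusion;
(I) every fully normalized `P ≤ S` is fully centralized and `Aut_S(P)` is a Sylow
`p`-subgroup of `Aut_F(P)`;  (II) every `φ = c_g : P → S` with `gPg⁻¹` fully centralized
extends to `N_φ`. -/
theorem fusion_system_of_finite_group_is_saturated
    (G : Type) [Group G] [Finite G] (p : ℕ) [Fact p.Prime] (S : Sylow p G) :
    -- axiom (1): Hom_S ⊆ Hom_F ⊆ Inj
    (∀ P Q : Subgroup G, P ≤ S → Q ≤ S → ∀ φ : ↥P →* ↥Q,
      (IsSubConjMor (S : Subgroup G) P Q φ → IsFusionMor P Q φ) ∧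
      (IsFusionMor P Q φ → Function.Injective φ)) ∧
    -- axiom (2): factorization as isomorphism followed by inclusion
    (∀ P Q : Subgroup G, P ≤ S → Q ≤ S → ∀ φ : ↥P →* ↥Q, IsFusionMor P Q φ →
      ∃ (R : Subgroup G) (hR : R ≤ Q) (ψ : ↥P →* ↥R),
        IsFusionMor P R ψ ∧ Function.Bijective ψ ∧
          φ = (Subgroup.inclusion hR).comp ψ) ∧
    -- saturation axiom (I)
    (∀ P : Subgroup G, P ≤ S → FullyNormalized (S : Subgroup G) P →
      FullyCentralized (S : Subgroup G) P ∧
        IsPGroup p ↥(autS (S : Subgroup G) P) ∧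
        ¬ p ∣ ((autS (S : Subgroup G) P).subgroupOf (autF P)).index) ∧
    -- saturation axiom (II)
    (∀ (P : Subgroup G) (g : G), P ≤ S → conjSub g P ≤ S →
      FullyCentralized (S : Subgroup G) (conjSub g P) →
      ∃ g' : G, (∀ n ∈ Nphi (S : Subgroup G) P g, g' * n * g'⁻¹ ∈ (S : Subgroup G)) ∧
        ∀ x ∈ P, g' * x * g'⁻¹ = g * x * g⁻¹) := by
  refine ⟨fun P Q _ _ φ => ⟨IsSubConjMor.isFusionMor, IsFusionMor.injective⟩,
    fun P Q _ _ φ hφ => hφ.exists_eq_inclusion_comp,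
    fun P hP h => ⟨h.fullyCentralized hP, isPGroup_autS S P, h.not_dvd_index_autS hP⟩,
    fun P g _ hQS h => h.exists_extension hQS⟩
end

section
/- Let (S,F,L) be a p-local finite group and Γ = Γ_{p'}(F), with projection functor Θ̂ : L → B(Γ). Fix a subgroup H ≤ Γ and let ι : L_H → L be the inclusion of the index-prime-to-p subsystem. For an object P of L, let G_H(P) be the full subcategory of the under-category P ↓ ι whose objects are pairs (P^α, α) for isomorphisms α : P → P^α ≤ S in L. Then G_H(P) is a discrete groupoid and is a left deformation retract of P ↓ ι. -/
/-!
Every morphism `α : P ⟶ Q` of `L` factors as an isomorphism `restr α : P ⟶ P^α` followed by an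
inclusion, and `Θ̂` kills inclusions. So the inclusion is a morphism `(P^α, restr α) ⟶ (Q, α)` of
`P ↓ ι` out of an object of `G_H(P)`: sending `(Q, α)` to `(P^α, restr α)` is the retraction and
these inclusions form the deformation, which is the identity when `α` is already an isomorphism.
Structure maps of objects of `G_H(P)` are epimorphisms, so hom-sets out of such objects have at
most one element and every functoriality and naturality condition holds automatically. Finally
`Θ̂(φ⁻¹) = Θ̂(φ)⁻¹`, so `ι` reflects isomorphisms, which makes `G_H(P)` a groupoid.
-/

open CategoryTheory

/-- Skeletal data of a (quasi)centric linking system of a `p`-local finite group, as used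
in [Levi–Ragnarsson]: a small category `L` with distinguished object `S`, the projection
functor `Θ̂ : L ⥤ B(Γ)` onto (the one-object category of) the group `Γ = Γ_{p'}(F)`,
an image factorization of every morphism into an isomorphism followed by an "inclusion"
(inclusions being collapsed to the identity by `Θ̂`), surjectivity of
`Aut_L(S) → Γ`, and restrictions of automorphisms of `S` to every object. -/
structure LinkingData (L : Type) [SmallCategory L] (Γ : Type) [Group Γ] where
  S : L
  Θ : L ⥤ SingleObj Γ
  im : ∀ {P Q : L}, (P ⟶ Q) → L
  restr : ∀ {P Q : L} (f : P ⟶ Q), P ⟶ im f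
  incl : ∀ {P Q : L} (f : P ⟶ Q), im f ⟶ Q
  restr_isIso : ∀ {P Q : L} (f : P ⟶ Q), IsIso (restr f)
  fac : ∀ {P Q : L} (f : P ⟶ Q), restr f ≫ incl f = f
  theta_incl : ∀ {P Q : L} (f : P ⟶ Q), (show Γ from Θ.map (incl f)) = 1
  im_of_isIso : ∀ {P Q : L} (f : P ⟶ Q), IsIso f → im f = Q
  incl_of_isIso : ∀ {P Q : L} (f : P ⟶ Q) (h : IsIso f), incl f = eqToHom (im_of_isIso f h)
  theta_surj : ∀ γ : Γ, ∃ e : S ⟶ S, IsIso e ∧ (show Γ from Θ.map e) = γ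
  conjObj : Γ → L → L
  conjMor : ∀ (γ : Γ) (P : L), conjObj γ P ⟶ P
  conjMor_isIso : ∀ (γ : Γ) (P : L), IsIso (conjMor γ P)
  theta_conjMor : ∀ (γ : Γ) (P : L), (show Γ from Θ.map (conjMor γ P)) = γ

variable {L : Type} [SmallCategory L] {Γ : Type} [Group Γ]

/-- The underlying type of the wide subcategory `L_H ⊆ L` of morphisms whose image under
`Θ̂` lies in the subgroup `H ≤ Γ`; this is the linking system of the subsystem of index
prime to `p` corresponding to `H`. -/
def LSub (_D : LinkingData L Γ) (_H : Subgroup Γ) : Type := L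

instance LSub.category (D : LinkingData L Γ) (H : Subgroup Γ) : Category (LSub D H) where
  Hom X Y := {f : (show L from X) ⟶ (show L from Y) // (show Γ from D.Θ.map f) ∈ H}
  id X := ⟨𝟙 (show L from X), by
    have : (show Γ from D.Θ.map (𝟙 (show L from X))) = 1 := by rw [D.Θ.map_id]; rfl
    rw [this]; exact H.one_mem⟩
  comp {X Y Z} f g := ⟨f.1 ≫ g.1, by
    have : (show Γ from D.Θ.map (f.1 ≫ g.1)) =
        (show Γ from D.Θ.map g.1) * (show Γ from D.Θ.map f.1) := by
      rw [D.Θ.map_comp]; rfl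
    rw [this]; exact H.mul_mem g.2 f.2⟩
  id_comp f := by apply Subtype.ext; exact Category.id_comp f.1
  comp_id f := by apply Subtype.ext; exact Category.comp_id f.1
  assoc f g h := by apply Subtype.ext; exact Category.assoc f.1 g.1 h.1

/-- The inclusion functor `ι : L_H ⥤ L`. -/
def LSub.ι (D : LinkingData L Γ) (H : Subgroup Γ) : LSub D H ⥤ L where
  obj X := X
  map f := f.1

namespace CategoryTheory.StructuredArrow

variable {C E : Type*} [Category C] [Category E] {P : E} {F : C ⥤ E}

lemma subsingleton_hom_of_epi [F.Faithful] (A B : StructuredArrow P F) [Epi A.hom] :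
    Subsingleton (A ⟶ B) :=
  ⟨fun f g => ext f g <| F.map_injective <| (cancel_epi A.hom).1 (by rw [w f, w g])⟩

instance isThin_fullSubcategory_isIso_hom [F.Faithful] :
    Quiver.IsThin (ObjectProperty.FullSubcategory fun X : StructuredArrow P F => IsIso X.hom) :=
  fun X Y =>
    have := X.property
    ⟨fun f g => ObjectProperty.hom_ext _ ((subsingleton_hom_of_epi X.obj Y.obj).elim f.hom g.hom)⟩

lemma isIso_of_isIso_hom [F.ReflectsIsomorphisms] {A B : StructuredArrow P F}
    [IsIso A.hom] [IsIso B.hom] (f : A ⟶ B) : IsIso f := by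
  have : F.map f.right = inv A.hom ≫ B.hom := by rw [← w f, IsIso.inv_hom_id_assoc]
  have : IsIso (F.map f.right) := by rw [this]; infer_instance
  have : IsIso ((proj P F).map f) := isIso_of_reflects_iso f.right F
  exact isIso_of_reflects_iso f (proj P F)

instance isIso_fullSubcategory_isIso_hom [F.ReflectsIsomorphisms]
    {X Y : ObjectProperty.FullSubcategory fun X : StructuredArrow P F => IsIso X.hom}
    (f : X ⟶ Y) : IsIso f := by
  have := X.property
  have := Y.property
  have : IsIso ((ObjectProperty.ι _).map f) := isIso_of_isIso_hom f.hom
  exact isIso_of_reflects_iso f (ObjectProperty.ι _)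

end CategoryTheory.StructuredArrow

namespace LinkingData

variable (D : LinkingData L Γ)

def θ {P Q : L} (f : P ⟶ Q) : Γ := D.Θ.map f

lemma θ_comp {P Q R : L} (f : P ⟶ Q) (g : Q ⟶ R) : D.θ (f ≫ g) = D.θ g * D.θ f := by
  rw [θ, D.Θ.map_comp, SingleObj.comp_as_mul]; rfl

lemma θ_inv {P Q : L} (e : P ⟶ Q) [IsIso e] : D.θ (inv e) = (D.θ e)⁻¹ := by
  rw [θ, D.Θ.map_inv, SingleObj.inv_as_inv]; rfl

lemma θ_incl {P Q : L} (f : P ⟶ Q) : D.θ (D.incl f) = 1 :=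
  D.theta_incl f

lemma θ_restr {P Q : L} (f : P ⟶ Q) : D.θ (D.restr f) = D.θ f := by
  conv_rhs => rw [← D.fac f]
  rw [θ_comp, θ_incl, one_mul]

variable (H : Subgroup Γ)

instance : (LSub.ι D H).Faithful where
  map_injective := Subtype.ext

instance : (LSub.ι D H).ReflectsIsomorphisms where
  reflects {X Y} f (_ : IsIso f.1) :=
    ⟨⟨⟨inv f.1, show D.θ (inv f.1) ∈ H by rw [θ_inv]; exact H.inv_mem f.2⟩,
      Subtype.ext (IsIso.hom_inv_id f.1), Subtype.ext (IsIso.inv_hom_id f.1)⟩⟩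

variable {D H} {P : L}

lemma θ_hom_mul_inv_mem {A B : StructuredArrow P (LSub.ι D H)} (φ : A ⟶ B) :
    D.θ B.hom * (D.θ A.hom)⁻¹ ∈ H := by
  rw [← StructuredArrow.w φ, θ_comp, mul_inv_cancel_right]
  exact φ.right.2

noncomputable def homOfIsIsoHom {A B : StructuredArrow P (LSub.ι D H)} [IsIso A.hom]
    (h : D.θ B.hom * (D.θ A.hom)⁻¹ ∈ H) : A ⟶ B :=
  StructuredArrow.homMk
    ⟨(inv A.hom ≫ B.hom : (LSub.ι D H).obj A.right ⟶ _), show D.θ (inv A.hom ≫ B.hom) ∈ H by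
      rwa [θ_comp, θ_inv]⟩
    (IsIso.hom_inv_id_assoc A.hom B.hom)

variable (D H P)

/-- The object `(P^α, restr α)` of `G_H(P)` attached to `α : P ⟶ Q`. -/
def imageArrow (X : StructuredArrow P (LSub.ι D H)) : StructuredArrow P (LSub.ι D H) :=
  StructuredArrow.mk (T := LSub.ι D H) (Y := (show LSub D H from D.im X.hom)) (D.restr X.hom)

instance (X : StructuredArrow P (LSub.ι D H)) : IsIso (imageArrow D H P X).hom :=
  D.restr_isIso X.hom

lemma imageArrow_eq_self (X : StructuredArrow P (LSub.ι D H)) [hX : IsIso X.hom] :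
    imageArrow D H P X = X :=
  StructuredArrow.obj_ext _ _
    (show (imageArrow D H P X).right = X.right from D.im_of_isIso X.hom hX) <| by
    rw [eqToHom_map]
    conv_rhs => rw [← D.fac X.hom, D.incl_of_isIso X.hom hX]
    rfl

def imageArrowIncl (X : StructuredArrow P (LSub.ι D H)) : imageArrow D H P X ⟶ X :=
  StructuredArrow.homMk
    (⟨D.incl X.hom, show D.θ (D.incl X.hom) ∈ H by rw [θ_incl]; exact H.one_mem⟩ :
      (imageArrow D H P X).right ⟶ X.right)
    (D.fac X.hom)

/-- `G_H(P)`. -/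
abbrev IsoArrows : Type :=
  ObjectProperty.FullSubcategory fun X : StructuredArrow P (LSub.ι D H) => IsIso X.hom

noncomputable def retraction : StructuredArrow P (LSub.ι D H) ⥤ IsoArrows D H P where
  obj X := ⟨imageArrow D H P X, inferInstance⟩
  map {X Y} φ := ObjectProperty.homMk <| homOfIsIsoHom <|
    show D.θ (D.restr Y.hom) * (D.θ (D.restr X.hom))⁻¹ ∈ H by
      rw [θ_restr, θ_restr]; exact θ_hom_mul_inv_mem φ
  map_id _ := Subsingleton.elim _ _
  map_comp _ _ := Subsingleton.elim _ _

lemma ι_comp_retraction : ObjectProperty.ι _ ⋙ retraction D H P = 𝟭 (IsoArrows D H P) :=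
  CategoryTheory.Functor.ext
    (fun X => ObjectProperty.FullSubcategory.ext (imageArrow_eq_self D H P (hX := X.property)))
    (fun _ _ _ => Subsingleton.elim _ _)

def deformation :
    retraction D H P ⋙ ObjectProperty.ι _ ⟶ 𝟭 (StructuredArrow P (LSub.ι D H)) where
  app := imageArrowIncl D H P
  naturality X _ _ := (StructuredArrow.subsingleton_hom_of_epi (imageArrow D H P X) _).elim _ _

end LinkingData

/-- For an object `P` of `L`, let `G_H(P)` be the full subcategory of the
under-category `P ↓ ι` (`ι : L_H ⥤ L` the inclusion of the subsystem of index prime to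
`p`) on the objects `(Q, α)` with `α : P ⟶ Q` an isomorphism in `L`.  Then `G_H(P)` is a
discrete groupoid and a left deformation retract of `P ↓ ι`. -/
theorem GH_discrete_groupoid_and_deformation_retract
    (D : LinkingData L Γ) (H : Subgroup Γ) (P : L) :
    (∀ X Y : ObjectProperty.FullSubcategory
        (fun X : StructuredArrow P (LSub.ι D H) => IsIso X.hom),
      Subsingleton (X ⟶ Y) ∧ ∀ f : X ⟶ Y, IsIso f) ∧
    ∃ (r : StructuredArrow P (LSub.ι D H) ⥤
        ObjectProperty.FullSubcategory (fun X : StructuredArrow P (LSub.ι D H) => IsIso X.hom))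
      (h : ObjectProperty.ι _ ⋙ r = 𝟭 _)
      (η : r ⋙ ObjectProperty.ι _ ⟶ 𝟭 _),
      ∀ X : ObjectProperty.FullSubcategory (fun X : StructuredArrow P (LSub.ι D H) => IsIso X.hom),
        η.app ((ObjectProperty.ι _).obj X) =
          eqToHom (by
            simpa using
              congrArg (ObjectProperty.ι _).obj (Functor.congr_obj h X)) := by
  refine ⟨fun X Y => ⟨inferInstance, inferInstance⟩, LinkingData.retraction D H P,
    LinkingData.ι_comp_retraction D H P, LinkingData.deformation D H P,
    fun X => (StructuredArrow.subsingleton_hom_of_epi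
      (LinkingData.imageArrow D H P X.obj) _).elim _ _⟩
end

section
/- In the setting of a p-local finite group (S,F,L) with Γ = Γ_{p'}(F) and H ≤ Γ, the functor δ_P : G_H(P) → Γ/H sending an object (P^α, α) to the coset Θ̂(α)^{-1}H is well defined and is an equivalence of categories, where Γ/H is viewed as a discrete category with object set the left cosets. -/
open CategoryTheory

variable {L : Type} [SmallCategory L] {Γ : Type} [Group Γ]

/-! Since `α` is an isomorphism, a morphism `(P^α, α) ⟶ (P^β, β)` of `G_H(P)` can only be
`β ∘ α⁻¹`, and it exists exactly when `Θ̂(β ∘ α⁻¹) = Θ̂(β) Θ̂(α)⁻¹` lies in `H`, i.e. when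
`Θ̂(α)⁻¹H = Θ̂(β)⁻¹H`. So `G_H(P)` is a discrete groupoid whose isomorphism classes are the
cosets of `H`, and every coset `γH` is hit by the restriction `(D.conjMor γ P)⁻¹` of `γ` to `P`. -/

theorem StructuredArrow.subsingleton_hom_of_epi {C E : Type*} [Category C] [Category E]
    {P : C} {F : E ⥤ C} [F.Faithful] {X Y : StructuredArrow P F} [Epi X.hom] :
    Subsingleton (X ⟶ Y) :=
  ⟨fun f g => StructuredArrow.hom_ext f g <| F.map_injective <| (cancel_epi X.hom).mp <| by
    rw [StructuredArrow.w f, StructuredArrow.w g]⟩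

namespace LinkingData

variable (D : LinkingData L Γ)

theorem theta_comp {A B C : L} (f : A ⟶ B) (g : B ⟶ C) :
    (show Γ from D.Θ.map (f ≫ g)) = (show Γ from D.Θ.map g) * (show Γ from D.Θ.map f) := by
  rw [D.Θ.map_comp]; rfl

theorem theta_inv {A B : L} (g : A ⟶ B) [IsIso g] :
    (show Γ from D.Θ.map (inv g)) = (show Γ from D.Θ.map g)⁻¹ :=
  eq_inv_of_mul_eq_one_left <| by
    rw [← theta_comp, IsIso.hom_inv_id, D.Θ.map_id]; rfl

attribute [instance] conjMor_isIso

end LinkingData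

instance LSub.ι_faithful (D : LinkingData L Γ) (H : Subgroup Γ) : (LSub.ι D H).Faithful :=
  ⟨fun h => Subtype.ext h⟩

/-- The groupoid `G_H(P)`. -/
abbrev GH (D : LinkingData L Γ) (H : Subgroup Γ) (P : L) :=
  ObjectProperty.FullSubcategory (fun X : StructuredArrow P (LSub.ι D H) => IsIso X.hom)

namespace GH

variable {D : LinkingData L Γ} {H : Subgroup Γ} {P : L}

instance (X : GH D H P) : IsIso X.obj.hom := X.property

instance (X Y : GH D H P) : Subsingleton (X ⟶ Y) :=
  ⟨fun _ _ => ObjectProperty.hom_ext _ (StructuredArrow.subsingleton_hom_of_epi.elim _ _)⟩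

def coset (X : GH D H P) : Γ ⧸ H := QuotientGroup.mk (show Γ from D.Θ.map X.obj.hom)⁻¹

theorem coset_eq_coset_iff (X Y : GH D H P) :
    X.coset = Y.coset ↔
      (show Γ from D.Θ.map Y.obj.hom) * (show Γ from D.Θ.map X.obj.hom)⁻¹ ∈ H := by
  rw [coset, coset, QuotientGroup.eq, inv_inv, ← H.inv_mem_iff, mul_inv_rev, inv_inv]

theorem coset_eq_of_hom {X Y : GH D H P} (f : X ⟶ Y) : X.coset = Y.coset := by
  rw [coset_eq_coset_iff, ← StructuredArrow.w f.hom, LinkingData.theta_comp, mul_inv_cancel_right]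
  exact f.hom.right.2

theorem nonempty_hom_of_coset_eq {X Y : GH D H P} (h : X.coset = Y.coset) : Nonempty (X ⟶ Y) :=
  have hmem : (show Γ from D.Θ.map (inv X.obj.hom ≫ Y.obj.hom)) ∈ H := by
    rw [D.theta_comp, D.theta_inv]
    exact (coset_eq_coset_iff X Y).mp h
  -- the instance on `X.obj.hom` is not found at the unfolded type `P ⟶ (show L from _)`
  ⟨ObjectProperty.homMk <|
    StructuredArrow.homMk ⟨inv X.obj.hom (I := X.property) ≫ Y.obj.hom, hmem⟩ <|
      IsIso.hom_inv_id_assoc X.obj.hom Y.obj.hom⟩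

/-- The object `(P^γ, (D.conjMor γ P)⁻¹)`. -/
noncomputable def ofElement (D : LinkingData L Γ) (H : Subgroup Γ) (P : L) (γ : Γ) : GH D H P :=
  ⟨StructuredArrow.mk (Y := (show LSub D H from D.conjObj γ P))
      (show P ⟶ D.conjObj γ P from inv (D.conjMor γ P)),
    inferInstanceAs (IsIso (inv (D.conjMor γ P)))⟩

theorem coset_ofElement (γ : Γ) : (ofElement D H P γ).coset = (γ : Γ ⧸ H) := by
  change QuotientGroup.mk (show Γ from D.Θ.map (inv (D.conjMor γ P)))⁻¹ = (γ : Γ ⧸ H)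
  rw [D.theta_inv, D.theta_conjMor, inv_inv]

end GH

/-- The functor `δ_P`. -/
def deltaP (D : LinkingData L Γ) (H : Subgroup Γ) (P : L) : GH D H P ⥤ Discrete (Γ ⧸ H) where
  obj X := ⟨X.coset⟩
  map f := Discrete.eqToHom (GH.coset_eq_of_hom f)

section

variable (D : LinkingData L Γ) (H : Subgroup Γ) (P : L)

instance deltaP_faithful : (deltaP D H P).Faithful := ⟨fun _ => Subsingleton.elim _ _⟩

instance deltaP_full : (deltaP D H P).Full :=
  ⟨fun f => ⟨(GH.nonempty_hom_of_coset_eq (Discrete.eq_of_hom f)).some, Subsingleton.elim _ _⟩⟩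

instance deltaP_essSurj : (deltaP D H P).EssSurj :=
  ⟨fun ⟨q⟩ => q.inductionOn fun γ =>
    ⟨GH.ofElement D H P γ, ⟨Discrete.eqToIso (GH.coset_ofElement γ)⟩⟩⟩

end

/-- The functor `δ_P : G_H(P) ⥤ Γ/H` sending an object `(P^α, α)` to the
left coset `Θ̂(α)⁻¹H` is well defined and an equivalence of categories, where `Γ/H` is
viewed as a discrete category on the set of left cosets. -/
theorem deltaP_equivalence
    (D : LinkingData L Γ) (H : Subgroup Γ) (P : L) :
    ∃ δ : ObjectProperty.FullSubcategory (fun X : StructuredArrow P (LSub.ι D H) => IsIso X.hom) ⥤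
        Discrete (Γ ⧸ H),
      (∀ X : ObjectProperty.FullSubcategory (fun X : StructuredArrow P (LSub.ι D H) => IsIso X.hom),
        (δ.obj X).as = QuotientGroup.mk ((show Γ from D.Θ.map X.obj.hom))⁻¹) ∧
      δ.IsEquivalence :=
  ⟨deltaP D H P, fun _ => rfl, { }⟩
end

section
/- (Frobenius reciprocity) Let (S,F,L) be a p-local finite group, Γ = Γ_{p'}(F) (or Γ_p(F)), H ≤ K ≤ Γ, and A a system of ring coefficients on L. For x ∈ lim^*_{L_K} ι_K*A and y ∈ lim^*_{L_H} ι_H*A, the transfer satisfies Tr^K_H(Res^K_H(x) · y) = x · Tr^K_H(y), where · denotes the cup product. -/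
open CategoryTheory

variable {L : Type} [SmallCategory L] {Γ : Type} [Group Γ]

/-- The conjugate `u^γ` of a cochain with values in a system of ring coefficients
`A : L ⥤ CommRing`, given by `(u^γ)_P = A(α)(u_{α⁻¹(P)})` for `α` with `Θ̂(α) = γ`. -/
noncomputable def conjFamRing (D : LinkingData L Γ) (A : L ⥤ CommRingCat) (γ : Γ)
    (u : ∀ P : L, A.obj P) : ∀ P : L, A.obj P :=
  fun P => A.map (D.conjMor γ P) (u (D.conjObj γ P))

/-- The transfer `Tr^K_H(u) = Σ_{ḡ ∈ K/H} u^g` of a cochain, for subgroups `H ≤ K ≤ Γ`. -/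
noncomputable def trFamRing (D : LinkingData L Γ) (A : L ⥤ CommRingCat)
    (H K : Subgroup Γ) (u : ∀ P : L, A.obj P) : ∀ P : L, A.obj P :=
  fun P => ∑ᶠ q : ↥K ⧸ H.subgroupOf K, conjFamRing D A ((Quotient.out q : ↥K) : Γ) u P

theorem conjFamRing_mul (D : LinkingData L Γ) (A : L ⥤ CommRingCat) (γ : Γ)
    (u v : ∀ P : L, A.obj P) (P : L) :
    conjFamRing D A γ (fun Q => u Q * v Q) P = conjFamRing D A γ u P * conjFamRing D A γ v P :=
  map_mul _ _ _

theorem conjFamRing_eq_self_of_mem (D : LinkingData L Γ) (A : L ⥤ CommRingCat)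
    {K : Subgroup Γ} (u : ∀ P : L, A.obj P)
    (hu : ∀ {P Q : L} (ψ : P ⟶ Q), (show Γ from D.Θ.map ψ) ∈ K → A.map ψ (u P) = u Q)
    {γ : Γ} (hγ : γ ∈ K) (P : L) :
    conjFamRing D A γ u P = u P :=
  hu _ (by rw [D.theta_conjMor]; exact hγ)

theorem frobenius_reciprocity_general
    (D : LinkingData L Γ) (H K : Subgroup Γ) [Finite Γ]
    (A : L ⥤ CommRingCat)
    (u : ∀ P : L, A.obj P)
    (hu : ∀ {P Q : L} (ψ : P ⟶ Q),
      (show Γ from D.Θ.map ψ) ∈ K → A.map ψ (u P) = u Q)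
    (v : ∀ P : L, A.obj P) :
    ∀ P : L,
      trFamRing D A H K (fun Q => u Q * v Q) P = u P * trFamRing D A H K v P := by
  intro P
  have hterm : ∀ q : ↥K ⧸ H.subgroupOf K,
      conjFamRing D A ((Quotient.out q : ↥K) : Γ) (fun Q => u Q * v Q) P
        = u P * conjFamRing D A ((Quotient.out q : ↥K) : Γ) v P := fun q => by
    rw [conjFamRing_mul, conjFamRing_eq_self_of_mem D A u hu (Quotient.out q).2]
  simp only [trFamRing, hterm]
  exact (mul_finsum' _ _ (Set.toFinite _)).symm

/-- **Frobenius reciprocity.** For a `p`-local finite group `(S,F,L)` with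
`Γ = Γ_{p'}(F)`, subgroups `H ≤ K ≤ Γ` and a system of ring coefficients `A` on `L`,
the transfer satisfies `Tr^K_H(Res^K_H(x)·y) = x·Tr^K_H(y)`:  at the cochain level, for a
cochain `u` natural on `L_K` and a cochain `v` natural on `L_H`,
`Tr^K_H(u·v) = u·Tr^K_H(v)` (the restriction `Res^K_H u` being `u` itself). -/
theorem frobenius_reciprocity
    (D : LinkingData L Γ) (H K : Subgroup Γ) (hHK : H ≤ K) [Finite Γ]
    (A : L ⥤ CommRingCat)
    (u : ∀ P : L, A.obj P)
    (hu : ∀ {P Q : L} (ψ : P ⟶ Q),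
      (show Γ from D.Θ.map ψ) ∈ K → A.map ψ (u P) = u Q)
    (v : ∀ P : L, A.obj P)
    (hv : ∀ {P Q : L} (ψ : P ⟶ Q),
      (show Γ from D.Θ.map ψ) ∈ H → A.map ψ (v P) = v Q) :
    ∀ P : L,
      trFamRing D A H K (fun Q => u Q * v Q) P = u P * trFamRing D A H K v P :=
  frobenius_reciprocity_general D H K A u hu v
end
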